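/- Let R be a ring and let E_0, E_1, ..., E_ℓ be R-modules together with surjective R-linear maps j_i : E_i → E_{i+1} for 0 ≤ i ≤ ℓ-1. Then the R-linear map δ : ⊕_{i=1}^{ℓ} Hom(E_i, E_i) → ⊕_{i=1}^{ℓ} Hom(E_{i-1}, E_i), sending (φ_1, ..., φ_ℓ) to the tuple whose i-th component is j_{i-1} ∘ φ_{i-1} − φ_i ∘ j_{i-1} (with the convention φ_0 = 0), is injective. -/

import Mathlib

/-! The difference `φ - ψ` satisfies `(φ - ψ)_{i+1} ∘ j_i = j_i ∘ (φ - ψ)_i`; starting from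
`(φ - ψ)_0 = 0`, surjectivity of each `j_i` propagates the vanishing one step up at a time. -/

theorem LinearMap.eq_of_comp_sub_comp_eq {R M N : Type*} [Ring R] [AddCommGroup M]
    [AddCommGroup N] [Module R M] [Module R N] {j : M →ₗ[R] N} (hj : Function.Surjective j)
    {a : Module.End R M} {b b' : Module.End R N}
    (h : j.comp a - b.comp j = j.comp a - b'.comp j) : b = b' :=
  (LinearMap.cancel_right hj).1 (sub_right_injective h)

/-- Injectivity of the map
`δ : ⊕_{i=1}^{ℓ} Hom(E_i, E_i) → ⊕_{i=1}^{ℓ} Hom(E_{i-1}, E_i)`,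
`δ(φ_1,…,φ_ℓ)_i = j_{i-1} ∘ φ_{i-1} − φ_i ∘ j_{i-1}` (with `φ_0 = 0`),
stated as: two tuples (extended by `φ_0 = 0`) with the same image under `δ` agree. -/
theorem stmt0 (R : Type*) [Ring R] (ℓ : ℕ) (E : Fin (ℓ + 1) → Type*)
    [∀ i, AddCommGroup (E i)] [∀ i, Module R (E i)]
    (j : ∀ i : Fin ℓ, E i.castSucc →ₗ[R] E i.succ)
    (hj : ∀ i, Function.Surjective (j i))
    (φ ψ : ∀ i : Fin (ℓ + 1), Module.End R (E i))
    (hφ0 : φ 0 = 0) (hψ0 : ψ 0 = 0)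
    (hδ : ∀ i : Fin ℓ,
      (j i).comp (φ i.castSucc) - (φ i.succ).comp (j i)
        = (j i).comp (ψ i.castSucc) - (ψ i.succ).comp (j i)) :
    φ = ψ := by
  funext i
  induction i using Fin.induction with
  | zero => rw [hφ0, hψ0]
  | succ i ih =>
    have hδi := hδ i
    rw [ih] at hδi
    exact LinearMap.eq_of_comp_sub_comp_eq (hj i) hδi
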